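/- arXiv:2405.05680 — 4 statements merged into one kernel-verified Lean document; each statement's English description precedes it below -/
import Mathlib

section
/- Let Δ₁,…,Δ_t be a ladder of integer segments and let 𝔪 be the multiset {Δ₁,…,Δ_t}. Then 𝔪 is of Speh type if and only if t is even and Δ_{2i−1} = νΔ_{2i} for every 1 ≤ i ≤ t/2. -/
/-- An integer segment `[a,b]` with `a ≤ b`; `left` is its beginning, `right` is its end. -/
structure Segment where
  left : ℤ
  right : ℤ
  le : left ≤ right

/-- `ν[a,b] = [a+1,b+1]`. -/
def Segment.nu (Δ : Segment) : Segment :=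
  ⟨Δ.left + 1, Δ.right + 1, by have := Δ.le; omega⟩

/-- A multiset of segments is of Speh type if it equals `𝔪' + ν𝔪'` for some `𝔪'`. -/
def SpehType (m : Multiset Segment) : Prop :=
  ∃ m' : Multiset Segment, m = m' + m'.map Segment.nu

/-!
If `𝔪 = 𝔪' + ν𝔪'`, a segment `Δ` of `𝔪` with the largest beginning cannot lie in `𝔪'` (else
`νΔ ∈ 𝔪` would begin later), so `Δ = νΔ'` with `Δ' ∈ 𝔪'`, and removing the pair `Δ, Δ'` leaves
a multiset of Speh type. In a ladder the beginnings strictly decrease, so the only candidate for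
`Δ'` with `νΔ' = Δ₁` is `Δ₂`: the ladder is of Speh type iff `Δ₁ = νΔ₂` and `Δ₃, …, Δ_t` is.
-/

namespace Segment

@[simp]
lemma nu_left (Δ : Segment) : Δ.nu.left = Δ.left + 1 := rfl

end Segment

namespace SpehType

open Multiset

lemma zero : SpehType 0 := ⟨0, by simp⟩

lemma nu_cons_cons {m : Multiset Segment} (h : SpehType m) (Δ : Segment) :
    SpehType (Δ.nu ::ₘ Δ ::ₘ m) := by
  obtain ⟨m', rfl⟩ := h
  exact ⟨Δ ::ₘ m', by simp only [map_cons, cons_add, add_cons, cons_swap]⟩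

lemma exists_eq_cons_of_forall_left_le {Δ : Segment} {m : Multiset Segment}
    (h : SpehType (Δ ::ₘ m)) (hmax : ∀ Γ ∈ m, Γ.left ≤ Δ.left) :
    ∃ Γ m₀, m = Γ ::ₘ m₀ ∧ Δ = Γ.nu ∧ SpehType m₀ := by
  obtain ⟨m', hm⟩ := h
  have hΔ : Δ ∉ m' := fun hΔ => by
    have : Δ.nu ∈ Δ ::ₘ m := hm ▸ mem_add.mpr (.inr (mem_map_of_mem _ hΔ))
    rcases mem_cons.mp this with h | h
    · simpa using congrArg Segment.left h
    · simpa using hmax _ h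
  obtain ⟨Γ, hΓ, rfl⟩ : ∃ Γ ∈ m', Γ.nu = Δ := by
    simpa [hΔ] using (hm ▸ mem_cons_self Δ m : Δ ∈ m' + m'.map Segment.nu)
  obtain ⟨m₀, rfl⟩ := exists_cons_of_mem hΓ
  refine ⟨Γ, m₀ + m₀.map Segment.nu, ?_, rfl, m₀, rfl⟩
  simpa only [map_cons, cons_add, add_cons, cons_inj_right] using hm

lemma not_singleton (Δ : Segment) : ¬ SpehType {Δ} := fun h => by
  obtain ⟨Γ, m₀, h0, -⟩ := exists_eq_cons_of_forall_left_le (m := 0) h (by simp)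
  exact cons_ne_zero h0.symm

end SpehType

def PairsBy {α : Type*} (R : α → α → Prop) : List α → Prop
  | [] => True
  | [_] => False
  | a :: b :: l => R a b ∧ PairsBy R l

lemma pairsBy_iff_getElem {α : Type*} (R : α → α → Prop) (l : List α) :
    PairsBy R l ↔
      Even l.length ∧ ∀ (i : ℕ) (h : 2 * i + 1 < l.length), R l[2 * i] l[2 * i + 1] := by
  induction l using PairsBy.induct with
  | case1 => simp [PairsBy]
  | case2 => simp [PairsBy]
  | case3 a b l ih =>
    simp only [PairsBy, ih, List.length_cons, Nat.even_add_one, not_not]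
    constructor
    · rintro ⟨hab, hl, hpairs⟩
      refine ⟨hl, fun i hi => ?_⟩
      cases i with
      | zero => exact hab
      | succ i => simpa [Nat.mul_succ] using hpairs i (by omega)
    · rintro ⟨hl, hpairs⟩
      refine ⟨hpairs 0 (by omega), hl, fun i hi => ?_⟩
      simpa [Nat.mul_succ] using hpairs (i + 1) (by omega)

lemma spehType_cons_cons_iff {Δ₁ Δ₂ : Segment} {l : List Segment}
    (hl : (Δ₁ :: Δ₂ :: l).Pairwise fun Δ Γ => Γ.left < Δ.left) :
    SpehType (Δ₁ :: Δ₂ :: l : List Segment) ↔ Δ₁ = Δ₂.nu ∧ SpehType l := by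
  simp only [List.pairwise_cons, List.mem_cons, forall_eq_or_imp] at hl
  obtain ⟨⟨h₁₂, h₁⟩, h₂, -⟩ := hl
  constructor
  · intro h
    obtain ⟨Γ, m₀, hm, rfl, hm₀⟩ := h.exists_eq_cons_of_forall_left_le (m := Δ₂ :: l)
      (by simpa using ⟨h₁₂.le, fun Γ hΓ => (h₁ Γ hΓ).le⟩)
    obtain rfl : Γ = Δ₂ := by
      by_contra hne
      have hΓ : Γ ∈ (Δ₂ :: l : Multiset Segment) := hm ▸ Multiset.mem_cons_self Γ m₀
      have := h₂ Γ (by simpa [hne] using hΓ)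
      simp only [Segment.nu_left] at h₁₂
      omega
    rw [← Multiset.cons_coe, Multiset.cons_inj_right] at hm
    exact ⟨rfl, hm ▸ hm₀⟩
  · rintro ⟨rfl, h⟩
    exact h.nu_cons_cons Δ₂

theorem spehType_iff_pairsBy_of_pairwise {l : List Segment}
    (hl : l.Pairwise fun Δ Γ => Γ.left < Δ.left) :
    SpehType l ↔ PairsBy (fun Δ Γ => Δ = Γ.nu) l := by
  induction l using PairsBy.induct with
  | case1 => simpa [PairsBy] using SpehType.zero
  | case2 Δ => simpa [PairsBy] using SpehType.not_singleton Δ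
  | case3 Δ₁ Δ₂ l ih =>
    rw [spehType_cons_cons_iff hl, ih (hl.sublist (by simp)), PairsBy]

/-- for a ladder `Δ₁,…,Δ_t`, the multiset `{Δ₁,…,Δ_t}` is of Speh type
iff `t` is even and `Δ_{2i−1} = νΔ_{2i}` for all `1 ≤ i ≤ t/2` (here written 0-indexed). -/
theorem speh_type_iff_pairs_of_ladder (t : ℕ) (Δ : Fin t → Segment)
    (hladder : ∀ i j : Fin t, i < j →
      (Δ j).left < (Δ i).left ∧ (Δ j).right < (Δ i).right) :
    SpehType (Finset.univ.val.map Δ) ↔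
      (Even t ∧ ∀ (i : ℕ) (h : 2 * i + 1 < t),
        Δ ⟨2 * i, by omega⟩ = (Δ ⟨2 * i + 1, h⟩).nu) := by
  have hpairwise : (List.ofFn Δ).Pairwise fun Δ Γ => Γ.left < Δ.left :=
    List.pairwise_ofFn.mpr fun i j hij => (hladder i j hij).1
  rw [Fin.univ_val_map, spehType_iff_pairsBy_of_pairwise hpairwise, pairsBy_iff_getElem]
  simp
end

section
/- Let 𝔪 be a multiset of integer segments of Speh type whose ends are pairwise distinct. Then the cardinality of 𝔪 is even, say 2k, and if Δ₁,…,Δ_{2k} enumerates 𝔪 with e(Δ₁) > e(Δ₂) > ⋯ > e(Δ_{2k}), then Δ_{2j−1} = νΔ_{2j} for every 1 ≤ j ≤ k. -/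
/-!
The segment `a` of largest end cannot lie in `𝔪′`, since `νa ∈ 𝔪` would have a larger end;
so `a = νc` with `c ∈ 𝔪′`. As `e(c) = e(a) - 1` and the ends strictly decrease, `c` is the
segment right after `a` in the enumeration. Removing `a` and `c` leaves `𝔪″ + ν𝔪″`, where
`𝔪′ = c + 𝔪″`, and we recurse.
-/

@[simp]
lemma Segment.right_nu (Δ : Segment) : Δ.nu.right = Δ.right + 1 := rfl

namespace SpehType

lemma even_card {m : Multiset Segment} (hm : SpehType m) : Even (Multiset.card m) := by
  obtain ⟨m', rfl⟩ := hm
  exact ⟨Multiset.card m', by simp⟩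

lemma exists_eq_nu_cons_cons {m : Multiset Segment} (hm : SpehType m) {a : Segment} (ha : a ∈ m)
    (hmax : ∀ t ∈ m, t.right ≤ a.right) :
    ∃ c rest, a = c.nu ∧ SpehType rest ∧ m = a ::ₘ c ::ₘ rest := by
  obtain ⟨m', rfl⟩ := hm
  have ha' : a ∉ m' := fun h =>
    absurd (hmax a.nu (Multiset.mem_add.2 (Or.inr (Multiset.mem_map_of_mem _ h)))) (by simp)
  obtain ⟨c, hc, rfl⟩ := Multiset.mem_map.1 ((Multiset.mem_add.1 ha).resolve_left ha')
  obtain ⟨m'', rfl⟩ := Multiset.exists_cons_of_mem hc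
  refine ⟨c, m'' + m''.map Segment.nu, rfl, ⟨m'', rfl⟩, ?_⟩
  simp only [Multiset.map_cons, Multiset.cons_add, Multiset.add_cons, Multiset.cons_swap]

lemma head_eq_nu_of_pairwise {a b : Segment} {l : List Segment}
    (hsort : (a :: b :: l).Pairwise fun s t => t.right < s.right)
    (hm : SpehType (a :: b :: l : List Segment)) :
    a = b.nu ∧ SpehType (l : Multiset Segment) := by
  obtain ⟨hab, hal⟩ := List.pairwise_cons.1 hsort
  obtain ⟨hbl, -⟩ := List.pairwise_cons.1 hal
  have hmax : ∀ t ∈ ((a :: b :: l : List Segment) : Multiset Segment), t.right ≤ a.right := by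
    intro t ht
    rcases List.mem_cons.1 (Multiset.mem_coe.1 ht) with rfl | ht
    · exact le_rfl
    · exact (hab t ht).le
  obtain ⟨c, rest, rfl, hrest, hcons⟩ :=
    hm.exists_eq_nu_cons_cons (Multiset.mem_coe.2 List.mem_cons_self) hmax
  rw [← Multiset.cons_coe, Multiset.cons_inj_right] at hcons
  have hcb : c = b := by
    rcases List.mem_cons.1 (Multiset.mem_coe.1 (hcons ▸ Multiset.mem_cons_self c rest)) with h | h
    · exact h
    · have hb := hab b List.mem_cons_self
      have hc := hbl c h
      simp only [Segment.right_nu] at hb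
      omega
  subst hcb
  rw [← Multiset.cons_coe, Multiset.cons_inj_right] at hcons
  exact ⟨rfl, hcons ▸ hrest⟩

lemma getElem_two_mul_eq_nu {l : List Segment} (hsort : l.Pairwise fun s t => t.right < s.right)
    (hm : SpehType (l : Multiset Segment)) (j : ℕ) (h : 2 * j + 1 < l.length) :
    l[2 * j] = l[2 * j + 1].nu := by
  obtain ⟨a, b, l, rfl⟩ : ∃ a b l', l = a :: b :: l' := by
    match l, h with
    | a :: b :: l', _ => exact ⟨a, b, l', rfl⟩
  obtain ⟨hab, hrest⟩ := head_eq_nu_of_pairwise hsort hm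
  cases j with
  | zero => exact hab
  | succ j =>
    simpa [Nat.mul_succ] using getElem_two_mul_eq_nu hsort.of_cons.of_cons hrest j (by simp at h; omega)

end SpehType

/-- a Speh-type multiset `𝔪` of segments with pairwise distinct ends has even
cardinality, and any enumeration `Δ₁,…,Δ_{2k}` of `𝔪` with strictly decreasing ends
satisfies `Δ_{2j−1} = νΔ_{2j}` (written here 0-indexed). -/
theorem speh_enum_pairs (m : Multiset Segment) (hspeh : SpehType m) :
    Even (Multiset.card m) ∧
      ∀ Δ : Fin (Multiset.card m) → Segment,
        Finset.univ.val.map Δ = m →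
        (∀ i j : Fin (Multiset.card m), i < j → (Δ j).right < (Δ i).right) →
        ∀ (j : ℕ) (h : 2 * j + 1 < Multiset.card m),
          Δ ⟨2 * j, by omega⟩ = (Δ ⟨2 * j + 1, h⟩).nu := by
  refine ⟨hspeh.even_card, fun Δ hΔ hdec j h => ?_⟩
  have hlist : (List.ofFn Δ : Multiset Segment) = m := by rw [← Fin.univ_val_map, hΔ]
  have hsort : (List.ofFn Δ).Pairwise fun s t => t.right < s.right := List.pairwise_ofFn.2 hdec
  have hpair := SpehType.getElem_two_mul_eq_nu hsort (by rwa [hlist]) j (by simpa using h)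
  rwa [List.getElem_ofFn, List.getElem_ofFn] at hpair
end

section
/- Let k ≥ 1 and let Δ₁,…,Δ_{2k} be a ladder of integer segments, Δ_j = [a_j,b_j], such that Δ_{2j−1} = νΔ_{2j} for every 1 ≤ j ≤ k. Fix 1 ≤ i ≤ 2k−1 with a_i ≤ b_{i+1} + 1, and let 𝔪_i be the multiset obtained from {Δ₁,…,Δ_{2k}} by removing Δ_i and Δ_{i+1} and adding the segment [a_{i+1}, b_i], together with the segment [a_i, b_{i+1}] in case a_i ≤ b_{i+1}. Then 𝔪_i is not of Speh type. -/
noncomputable instance : DecidableEq Segment := Classical.decEq _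

/-! Since `ν` preserves the length `b - a` of a segment, in a multiset of Speh type every length
occurs an even number of times; the ladder itself is of Speh type. The exchange removes `Δᵢ` and
`Δᵢ₊₁` and adds `[a_{i+1}, b_i]`, which is strictly longer than each of them and than
`[a_i, b_{i+1}]`, so the number of segments of its length goes up by one and becomes odd. -/

theorem Fin.sum_univ_two_mul {M : Type*} [AddCommMonoid M] (k : ℕ) (g : Fin (2 * k) → M) :
    ∑ i, g i = ∑ j : Fin k, (g ⟨2 * j, by omega⟩ + g ⟨2 * j + 1, by omega⟩) := by
  rw [← (finProdFinEquiv.trans (finCongr (Nat.mul_comm k 2))).sum_comp, Fintype.sum_prod_type]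
  refine Finset.sum_congr rfl fun j _ => ?_
  rw [Fin.sum_univ_two]
  congr 2 <;> simp [Fin.ext_iff]
  omega

theorem Finset.sum_singleton_eq_map_val {ι α : Type*} (s : Finset ι) (f : ι → α) :
    ∑ i ∈ s, ({f i} : Multiset α) = s.val.map f := by
  rw [Finset.sum_eq_multiset_sum, ← Multiset.sum_map_singleton (s.val.map f), Multiset.map_map]
  rfl

theorem Finset.pair_le_univ_val_map {α β : Type*} [Fintype α] (f : α → β) {a b : α}
    (hab : a ≠ b) : ({f a, f b} : Multiset β) ≤ Finset.univ.val.map f :=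
  Multiset.map_le_map (f := f) (s := {a, b})
    ((Multiset.le_iff_subset (by simpa using hab)).2 fun _ _ => Finset.mem_univ_val _)

namespace Segment

def len (s : Segment) : ℤ := s.right - s.left

@[simp]
theorem len_nu (s : Segment) : s.nu.len = s.len := by
  simp [len, nu]

end Segment

theorem SpehType.even_count_len {m : Multiset Segment} (h : SpehType m) (ℓ : ℤ) :
    Even ((m.map Segment.len).count ℓ) := by
  obtain ⟨m', rfl⟩ := h
  rw [Multiset.map_add, Multiset.map_map, Function.comp_def]
  simp only [Segment.len_nu, Multiset.count_add]
  exact ⟨_, rfl⟩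

theorem SpehType.not_sub_add_cons {M R I : Multiset Segment} (hM : SpehType M) (hR : R ≤ M)
    {U : Segment} (hRU : ∀ s ∈ R, s.len ≠ U.len) (hIU : ∀ s ∈ I, s.len ≠ U.len) :
    ¬ SpehType (M - R + U ::ₘ I) := by
  intro h
  have count_zero : ∀ S : Multiset Segment, (∀ s ∈ S, s.len ≠ U.len) →
      (S.map Segment.len).count U.len = 0 := fun S hS =>
    Multiset.count_eq_zero.2 (by simpa using hS)
  have hcount : ((M - R + U ::ₘ I).map Segment.len).count U.len
      = (M.map Segment.len).count U.len + 1 := by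
    conv_rhs => rw [← tsub_add_cancel_of_le hR]
    simp only [Multiset.map_add, Multiset.map_cons, Multiset.count_add, Multiset.count_cons_self,
      count_zero R hRU, count_zero I hIU]
  have hodd := h.even_count_len U.len
  rw [hcount, Nat.even_add_one] at hodd
  exact hodd (hM.even_count_len U.len)

theorem spehType_univ_map_of_pairs (k : ℕ) (Δ : Fin (2 * k) → Segment)
    (hpair : ∀ j : Fin k, Δ ⟨2 * j, by omega⟩ = (Δ ⟨2 * j + 1, by omega⟩).nu) :
    SpehType (Finset.univ.val.map Δ) := by
  refine ⟨Finset.univ.val.map fun j : Fin k => Δ ⟨2 * j + 1, by omega⟩, ?_⟩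
  rw [← Finset.sum_singleton_eq_map_val, Fin.sum_univ_two_mul, Multiset.map_map,
    ← Finset.sum_singleton_eq_map_val, ← Finset.sum_singleton_eq_map_val,
    ← Finset.sum_add_distrib]
  refine Finset.sum_congr rfl fun j _ => ?_
  rw [add_comm, hpair j]
  rfl

/-- for a ladder `Δ₁,…,Δ_{2k}` with `Δ_{2j−1} = νΔ_{2j}` for all `j`, and an
index `i` (0-indexed here) with `a_i ≤ b_{i+1} + 1`, the multiset obtained by replacing
`Δ_i, Δ_{i+1}` by `[a_{i+1}, b_i]` (together with `[a_i, b_{i+1}]` in case `a_i ≤ b_{i+1}`)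
is not of Speh type. -/
theorem exchanged_multiset_not_speh (k : ℕ) (Δ : Fin (2 * k) → Segment)
    (hladder : ∀ p q : Fin (2 * k), p < q →
      (Δ q).left < (Δ p).left ∧ (Δ q).right < (Δ p).right)
    (hpair : ∀ (j : ℕ) (hj : 2 * j + 1 < 2 * k),
      Δ ⟨2 * j, by omega⟩ = (Δ ⟨2 * j + 1, hj⟩).nu)
    (i : ℕ) (hi : i + 1 < 2 * k) :
    ¬ SpehType
      (Finset.univ.val.map Δ - ({Δ ⟨i, by omega⟩, Δ ⟨i + 1, hi⟩} : Multiset Segment)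
        + ((⟨(Δ ⟨i + 1, hi⟩).left, (Δ ⟨i, by omega⟩).right, by
              have h1 := (hladder ⟨i, by omega⟩ ⟨i + 1, hi⟩
                (Fin.mk_lt_mk.mpr (Nat.lt_succ_self i))).1
              have h2 := (Δ (⟨i, by omega⟩ : Fin (2 * k))).le
              omega⟩ : Segment) ::ₘ
          (if h : (Δ ⟨i, by omega⟩).left ≤ (Δ ⟨i + 1, hi⟩).right then
              {(⟨(Δ ⟨i, by omega⟩).left, (Δ ⟨i + 1, hi⟩).right, h⟩ : Segment)}
            else 0))) := by
  have hi' : i < 2 * k := by omega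
  obtain ⟨hleft, hright⟩ := hladder ⟨i, hi'⟩ ⟨i + 1, hi⟩ (Fin.mk_lt_mk.mpr i.lt_succ_self)
  have hladder_speh := spehType_univ_map_of_pairs k Δ fun j => hpair j (by omega)
  refine hladder_speh.not_sub_add_cons
    (Finset.pair_le_univ_val_map Δ (a := ⟨i, hi'⟩) (b := ⟨i + 1, hi⟩) (by simp)) ?_ ?_
  · simp only [Multiset.insert_eq_cons, Multiset.mem_cons, Multiset.mem_singleton]
    rintro s (rfl | rfl) <;> simp only [Segment.len] <;> omega
  · split_ifs
    · simp only [Multiset.mem_singleton]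
      rintro s rfl
      simp only [Segment.len]
      omega
    · simp
end

section
/- Let P₀ be the group of invertible upper triangular n×n matrices over D and let n₁, n₂ ∈ X = {x ∈ GLₙ(D) : x θ(x) = Iₙ} be monomial matrices. If n₂ = p n₁ θ(p)⁻¹ for some p ∈ P₀, then there exists an invertible diagonal matrix m over D such that n₂ = m n₁ θ(m)⁻¹. Consequently, two monomial matrices in X lying in the same P₀-orbit (for the action p·x = p x θ(p)⁻¹) lie in the same orbit under invertible diagonal matrices. -/
open Matrix

/-- The anti-diagonal matrix `J = Jₙ` whose `(i, n+1−i)` entries are `1`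
and all other entries are `0`. -/
def Jmat (D : Type*) [DivisionRing D] (n : ℕ) : Matrix (Fin n) (Fin n) D :=
  Matrix.of fun i j => if j = i.rev then 1 else 0

lemma Jmat_mul_self (D : Type*) [DivisionRing D] (n : ℕ) :
    Jmat D n * Jmat D n = 1 := by
  ext i j
  simp only [Jmat, Matrix.mul_apply, Matrix.of_apply, Matrix.one_apply]
  rw [Finset.sum_eq_single i.rev]
  · simp [Fin.rev_rev, eq_comm]
  · intro b _ hb; simp [hb]
  · simp

/-- `J` as an element of `GLₙ(D)` (it is its own inverse). -/
def Junit (D : Type*) [DivisionRing D] (n : ℕ) : (Matrix (Fin n) (Fin n) D)ˣ :=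
  ⟨Jmat D n, Jmat D n, Jmat_mul_self D n, Jmat_mul_self D n⟩

/-- The involution `θ(g) = J (ᵗḡ)⁻¹ J` of `G = GLₙ(D)`, where `ᵗḡ = star g` is the
conjugate transpose of `g` with respect to the anti-involution `x ↦ x̄` of `D`. -/
def theta {D : Type*} [DivisionRing D] [StarRing D] {n : ℕ}
    (g : (Matrix (Fin n) (Fin n) D)ˣ) : (Matrix (Fin n) (Fin n) D)ˣ :=
  Junit D n * (star g)⁻¹ * Junit D n

/-- A monomial matrix: exactly one nonzero entry in each row and in each column. -/
def IsMonomial {D : Type*} [DivisionRing D] {n : ℕ} (M : Matrix (Fin n) (Fin n) D) : Prop :=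
  (∀ i, ∃! j, M i j ≠ 0) ∧ (∀ j, ∃! i, M i j ≠ 0)

section AuxLemmas
variable {D : Type*} [DivisionRing D] {n : ℕ}

lemma Jmat_mul_apply (A : Matrix (Fin n) (Fin n) D) (i j : Fin n) :
    (Jmat D n * A) i j = A i.rev j := by
  rw [Matrix.mul_apply, Finset.sum_eq_single i.rev]
  · simp [Jmat]
  · intro k _ hk; simp [Jmat, hk]
  · simp

lemma mul_Jmat_apply (A : Matrix (Fin n) (Fin n) D) (i j : Fin n) :
    (A * Jmat D n) i j = A i j.rev := by
  rw [Matrix.mul_apply, Finset.sum_eq_single j.rev]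
  · simp [Jmat]
  · intro k _ hk
    have hne : j ≠ k.rev := fun h => hk (by rw [h, Fin.rev_rev])
    simp [Jmat, hne]
  · simp

lemma J_conj_apply (A : Matrix (Fin n) (Fin n) D) (i j : Fin n) :
    (Jmat D n * A * Jmat D n) i j = A i.rev j.rev := by
  rw [mul_Jmat_apply, Jmat_mul_apply]

/-- an invertible diagonal matrix as a unit -/
def diagUnit (f : Fin n → D) (hf : ∀ i, f i ≠ 0) : (Matrix (Fin n) (Fin n) D)ˣ :=
  ⟨Matrix.diagonal f, Matrix.diagonal fun i => (f i)⁻¹,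
   by rw [Matrix.diagonal_mul_diagonal]
      have h : (fun i => f i * (f i)⁻¹) = fun _ : Fin n => (1 : D) :=
        funext fun i => mul_inv_cancel₀ (hf i)
      rw [h, Matrix.diagonal_one],
   by rw [Matrix.diagonal_mul_diagonal]
      have h : (fun i => (f i)⁻¹ * f i) = fun _ : Fin n => (1 : D) :=
        funext fun i => inv_mul_cancel₀ (hf i)
      rw [h, Matrix.diagonal_one]⟩

@[simp] lemma diagUnit_val (f : Fin n → D) (hf : ∀ i, f i ≠ 0) :
    (diagUnit f hf).val = Matrix.diagonal f := rfl

@[simp] lemma diagUnit_inv_val (f : Fin n → D) (hf : ∀ i, f i ≠ 0) :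
    ((diagUnit f hf)⁻¹).val = Matrix.diagonal fun i => (f i)⁻¹ := rfl

/-- inverse of an invertible upper triangular matrix: nonzero diagonal,
upper triangular inverse, with inverted diagonal. -/
lemma tri_inv (p : (Matrix (Fin n) (Fin n) D)ˣ)
    (hp : ∀ i j : Fin n, j < i → p.val i j = 0) (i : Fin n) :
    p.val i i ≠ 0 ∧ (∀ j : Fin n, j < i → (p⁻¹).val i j = 0)
      ∧ (p⁻¹).val i i = (p.val i i)⁻¹ := by
  set q : Matrix (Fin n) (Fin n) D := (p⁻¹).val with hq
  have hpq : p.val * q = 1 := by rw [hq]; exact Units.mul_inv p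
  suffices key : ∀ k : ℕ, ∀ i : Fin n, n - i.val ≤ k →
      p.val i i ≠ 0 ∧ (∀ j : Fin n, j < i → q i j = 0) ∧ q i i = (p.val i i)⁻¹ by
    exact key n i (by omega)
  intro k
  induction k with
  | zero => intro i hi; exact absurd hi (by have := i.isLt; omega)
  | succ k ih =>
    intro i hik
    have IH : ∀ i' : Fin n, i < i' →
        p.val i' i' ≠ 0 ∧ (∀ j : Fin n, j < i' → q i' j = 0) ∧ q i' i' = (p.val i' i')⁻¹ := by
      intro i' hi'
      refine ih i' ?_
      have h1 : i.val < i'.val := hi'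
      omega
    have hdiag : p.val i i * q i i = 1 := by
      have h0 := congrFun (congrFun hpq i) i
      rw [Matrix.mul_apply, Finset.sum_eq_single i] at h0
      · rwa [Matrix.one_apply_eq] at h0
      · intro b _ hb
        rcases lt_or_gt_of_ne hb with h | h
        · rw [hp i b h, zero_mul]
        · rw [(IH b h).2.1 i h, mul_zero]
      · simp
    have hne : p.val i i ≠ 0 := by
      intro h0; rw [h0, zero_mul] at hdiag; exact zero_ne_one hdiag
    refine ⟨hne, fun j hj => ?_, (inv_eq_of_mul_eq_one_right hdiag).symm⟩
    have h0 := congrFun (congrFun hpq i) j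
    rw [Matrix.mul_apply, Finset.sum_eq_single i] at h0
    · rw [Matrix.one_apply_ne (fun h => absurd h.symm (ne_of_lt hj))] at h0
      exact (mul_eq_zero.mp h0).resolve_left hne
    · intro b _ hb
      rcases lt_or_gt_of_ne hb with h | h
      · rw [hp i b h, zero_mul]
      · rw [(IH b h).2.1 j (lt_trans hj h), mul_zero]
    · simp

lemma perm_eq_of_le (σ τ : Equiv.Perm (Fin n)) (h : ∀ i, τ i ≤ σ i) (i : Fin n) :
    τ i = σ i := by
  by_contra hne
  have hsum : ∑ j, ((τ j : ℕ)) = ∑ j, ((σ j : ℕ)) := by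
    rw [Equiv.sum_comp τ (fun j : Fin n => (j : ℕ)),
      Equiv.sum_comp σ (fun j : Fin n => (j : ℕ))]
  have hlt : ∑ j, ((τ j : ℕ)) < ∑ j, ((σ j : ℕ)) := by
    refine Finset.sum_lt_sum (fun j _ => h j) ⟨i, Finset.mem_univ i, ?_⟩
    exact lt_of_le_of_ne (h i) (fun hc => hne (Fin.val_injective hc))
  omega

/-- monomial matrices are rigid under sandwiching by unipotent upper triangular matrices -/
lemma monomial_rigid {N N' U W : Matrix (Fin n) (Fin n) D}
    (hN : IsMonomial N) (hN' : IsMonomial N')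
    (hU0 : ∀ i j : Fin n, j < i → U i j = 0) (hU1 : ∀ i, U i i = 1)
    (hW0 : ∀ i j : Fin n, j < i → W i j = 0) (hW1 : ∀ i, W i i = 1)
    (h : N' * W = U * N) : N' = N := by
  -- row and column functions for N
  have hσ : ∀ i, N i ((hN.1 i).choose) ≠ 0 ∧ ∀ j, N i j ≠ 0 → j = (hN.1 i).choose :=
    fun i => (hN.1 i).choose_spec
  have hρ : ∀ j, N ((hN.2 j).choose) j ≠ 0 ∧ ∀ i, N i j ≠ 0 → i = (hN.2 j).choose :=
    fun j => (hN.2 j).choose_spec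
  set σf : Fin n → Fin n := fun i => (hN.1 i).choose with hσf
  set ρf : Fin n → Fin n := fun j => (hN.2 j).choose with hρf
  have hlr : ∀ i, ρf (σf i) = i := fun i => ((hρ (σf i)).2 i (hσ i).1).symm
  have hrl : ∀ j, σf (ρf j) = j := fun j => ((hσ (ρf j)).2 j (hρ j).1).symm
  set σe : Equiv.Perm (Fin n) := ⟨σf, ρf, hlr, hrl⟩ with hσe
  -- row function for N'
  have hτ : ∀ i, N' i ((hN'.1 i).choose) ≠ 0 ∧ ∀ j, N' i j ≠ 0 → j = (hN'.1 i).choose :=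
    fun i => (hN'.1 i).choose_spec
  have hτ' : ∀ j, N' ((hN'.2 j).choose) j ≠ 0 ∧ ∀ i, N' i j ≠ 0 → i = (hN'.2 j).choose :=
    fun j => (hN'.2 j).choose_spec
  set τf : Fin n → Fin n := fun i => (hN'.1 i).choose with hτf
  set τg : Fin n → Fin n := fun j => (hN'.2 j).choose with hτg
  have hlr' : ∀ i, τg (τf i) = i := fun i => ((hτ' (τf i)).2 i (hτ i).1).symm
  have hrl' : ∀ j, τf (τg j) = j := fun j => ((hτ (τg j)).2 j (hτ' j).1).symm
  set τe : Equiv.Perm (Fin n) := ⟨τf, τg, hlr', hrl'⟩ with hτe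
  -- entry formulas
  have hG1 : ∀ i j, (U * N) i j = U i (ρf j) * N (ρf j) j := by
    intro i j
    rw [Matrix.mul_apply, Finset.sum_eq_single (ρf j)]
    · intro b _ hb
      have : N b j = 0 := by
        by_contra hc; exact hb ((hρ j).2 b hc)
      rw [this, mul_zero]
    · simp
  have hG2 : ∀ i j, (N' * W) i j = N' i (τf i) * W (τf i) j := by
    intro i j
    rw [Matrix.mul_apply, Finset.sum_eq_single (τf i)]
    · intro b _ hb
      have : N' i b = 0 := by
        by_contra hc; exact hb ((hτ i).2 b hc)
      rw [this, zero_mul]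
    · simp
  -- τf i ≤ σf i
  have hle : ∀ i, τf i ≤ σf i := by
    intro i
    have he : N' i (τf i) * W (τf i) (σf i) = N i (σf i) := by
      have := congrFun (congrFun h i) (σf i)
      rw [hG1, hG2, hlr, hU1, one_mul] at this
      exact this
    have hne : W (τf i) (σf i) ≠ 0 := by
      intro h0
      rw [h0, mul_zero] at he
      exact (hσ i).1 he.symm
    by_contra hc
    exact hne (hW0 (τf i) (σf i) (lt_of_not_ge hc))
  have heq : ∀ i, τf i = σf i := fun i => perm_eq_of_le σe τe hle i
  -- equal values on diagonal positions
  have hval : ∀ i, N' i (σf i) = N i (σf i) := by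
    intro i
    have := congrFun (congrFun h i) (σf i)
    rw [hG1, hG2, hlr, hU1, one_mul, heq i, hW1, mul_one] at this
    exact this
  ext i j
  by_cases hj : j = σf i
  · rw [hj]; exact hval i
  · have h1 : N i j = 0 := by by_contra hc; exact hj ((hσ i).2 j hc)
    have h2 : N' i j = 0 := by
      by_contra hc
      exact hj ((heq i) ▸ ((hτ i).2 j hc))
    rw [h1, h2]

lemma isMonomial_scale {M : Matrix (Fin n) (Fin n) D} (hM : IsMonomial M)
    (f g : Fin n → D) (hf : ∀ i, f i ≠ 0) (hg : ∀ j, g j ≠ 0) :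
    IsMonomial (Matrix.diagonal f * M * Matrix.diagonal g) := by
  have hiff : ∀ i j, (Matrix.diagonal f * M * Matrix.diagonal g) i j ≠ 0 ↔ M i j ≠ 0 := by
    intro i j
    rw [Matrix.mul_diagonal, Matrix.diagonal_mul]
    constructor
    · intro h hc; exact h (by rw [hc, mul_zero, zero_mul])
    · intro h
      exact mul_ne_zero (mul_ne_zero (hf i) h) (hg j)
  constructor
  · intro i
    obtain ⟨j, hj, hu⟩ := hM.1 i
    exact ⟨j, (hiff i j).mpr hj, fun y hy => hu y ((hiff i y).mp hy)⟩
  · intro j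
    obtain ⟨i, hi, hu⟩ := hM.2 j
    exact ⟨i, (hiff i j).mpr hi, fun y hy => hu y ((hiff y j).mp hy)⟩

end AuxLemmas

section ThetaLemmas
variable {D : Type*} [DivisionRing D] [StarRing D] {n : ℕ}

lemma Junit_val : (Junit D n).val = Jmat D n := rfl

lemma Junit_mul_Junit : Junit D n * Junit D n = 1 :=
  Units.ext (Jmat_mul_self D n)

lemma Junit_inv : (Junit D n)⁻¹ = Junit D n := by
  rw [inv_eq_iff_mul_eq_one]; exact Junit_mul_Junit

lemma theta_mul (g h : (Matrix (Fin n) (Fin n) D)ˣ) :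
    theta (g * h) = theta g * theta h := by
  unfold theta
  rw [StarMul.star_mul, _root_.mul_inv_rev]
  simp only [mul_assoc]
  congr 1
  congr 1
  rw [← mul_assoc (Junit D n) (Junit D n), Junit_mul_Junit, one_mul]

lemma theta_eq_inv (g : (Matrix (Fin n) (Fin n) D)ˣ) :
    theta g = (Junit D n * star g * Junit D n)⁻¹ := by
  rw [_root_.mul_inv_rev, _root_.mul_inv_rev, Junit_inv]
  unfold theta
  rw [mul_assoc]

lemma star_diagUnit (f : Fin n → D) (hf : ∀ i, f i ≠ 0) :
    star (diagUnit f hf) = diagUnit (fun i => star (f i)) (fun i => star_ne_zero.mpr (hf i)) := by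
  apply Units.ext
  rw [Units.coe_star, diagUnit_val, diagUnit_val, Matrix.star_eq_conjTranspose,
    Matrix.diagonal_conjTranspose]
  rfl

lemma theta_diagUnit (f : Fin n → D) (hf : ∀ i, f i ≠ 0) :
    theta (diagUnit f hf)
      = diagUnit (fun i => (star (f i.rev))⁻¹)
          (fun i => inv_ne_zero (star_ne_zero.mpr (hf i.rev))) := by
  apply Units.ext
  unfold theta
  rw [star_diagUnit]
  rw [Units.val_mul, Units.val_mul, diagUnit_inv_val, diagUnit_val]
  rw [Junit_val]
  ext i j
  rw [J_conj_apply, Matrix.diagonal_apply, Matrix.diagonal_apply]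
  by_cases hij : i = j
  · subst hij; simp
  · rw [if_neg (fun hc => hij (Fin.rev_injective hc)), if_neg hij]

end ThetaLemmas

/-- if two monomial matrices `n₁, n₂ ∈ X = {x : x θ(x) = Iₙ}` satisfy
`n₂ = p n₁ θ(p)⁻¹` for some invertible upper triangular `p`, then `n₂ = m n₁ θ(m)⁻¹` for
some invertible diagonal matrix `m`. -/
theorem monomial_P0_orbit_to_diagonal_orbit
    (D : Type*) [DivisionRing D] [StarRing D] (n : ℕ)
    (n₁ n₂ : (Matrix (Fin n) (Fin n) D)ˣ)
    (h₁ : n₁ * theta n₁ = 1) (h₂ : n₂ * theta n₂ = 1)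
    (hm₁ : IsMonomial n₁.val) (hm₂ : IsMonomial n₂.val)
    (p : (Matrix (Fin n) (Fin n) D)ˣ)
    (hp : ∀ i j : Fin n, j < i → p.val i j = 0)
    (hpx : n₂ = p * n₁ * (theta p)⁻¹) :
    ∃ m : (Matrix (Fin n) (Fin n) D)ˣ, m.val.IsDiag ∧ n₂ = m * n₁ * (theta m)⁻¹ := by
  have tri := tri_inv p hp
  set f : Fin n → D := fun i => p.val i i with hf_def
  have hf : ∀ i, f i ≠ 0 := fun i => (tri i).1
  set d : (Matrix (Fin n) (Fin n) D)ˣ := diagUnit f hf with hd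
  refine ⟨d, Matrix.isDiag_diagonal f, ?_⟩
  set u : (Matrix (Fin n) (Fin n) D)ˣ := d⁻¹ * p with hu
  -- u is unipotent upper triangular
  have huval : u.val = Matrix.diagonal (fun i => (f i)⁻¹) * p.val := by
    rw [hu, Units.val_mul, hd, diagUnit_inv_val]
  have hu0 : ∀ i j : Fin n, j < i → u.val i j = 0 := by
    intro i j hij
    rw [huval, Matrix.diagonal_mul, hp i j hij, mul_zero]
  have hu1 : ∀ i : Fin n, u.val i i = 1 := by
    intro i
    rw [huval, Matrix.diagonal_mul]
    exact inv_mul_cancel₀ (hf i)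
  -- A = J (star u) J is unipotent upper triangular, and theta u = A⁻¹
  set A : (Matrix (Fin n) (Fin n) D)ˣ := Junit D n * star u * Junit D n with hA
  have hAval : A.val = Jmat D n * star u.val * Jmat D n := by
    rw [hA, Units.val_mul, Units.val_mul, Units.coe_star]; rfl
  have hA0 : ∀ i j : Fin n, j < i → A.val i j = 0 := by
    intro i j hij
    rw [hAval, J_conj_apply, Matrix.star_apply, hu0 j.rev i.rev (Fin.rev_lt_rev.mpr hij),
      star_zero]
  have hA1 : ∀ i : Fin n, A.val i i = 1 := by
    intro i
    rw [hAval, J_conj_apply, Matrix.star_apply, hu1, star_one]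
  have hθu : theta u = A⁻¹ := theta_eq_inv u
  have hW0 : ∀ i j : Fin n, j < i → (theta u).val i j = 0 := by
    intro i j hij
    rw [hθu]
    exact (tri_inv A hA0 i).2.1 j hij
  have hW1 : ∀ i : Fin n, (theta u).val i i = 1 := by
    intro i
    rw [hθu, (tri_inv A hA0 i).2.2, hA1, inv_one]
  -- theta d is an invertible diagonal matrix
  set g : Fin n → D := fun i => (star (f i.rev))⁻¹ with hg_def
  have hg : ∀ i, g i ≠ 0 := fun i => inv_ne_zero (star_ne_zero.mpr (hf i.rev))
  have hθd : theta d = diagUnit g hg := theta_diagUnit f hf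
  -- the unit-level identity
  have hup : p = d * u := by rw [hu, mul_inv_cancel_left]
  have hE : (d⁻¹ * n₂ * theta d) * theta u = u * n₁ := by
    rw [hpx, hup, theta_mul]
    group
  -- monomiality of d⁻¹ n₂ θ(d)
  have hval' : (d⁻¹ * n₂ * theta d).val
      = Matrix.diagonal (fun i => (f i)⁻¹) * n₂.val * Matrix.diagonal g := by
    rw [Units.val_mul, Units.val_mul, hθd, diagUnit_val, hd, diagUnit_inv_val]
  have hN' : IsMonomial (d⁻¹ * n₂ * theta d).val := by
    rw [hval']
    exact isMonomial_scale hm₂ _ g (fun i => inv_ne_zero (hf i)) hg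
  -- rigidity
  have hmat : (d⁻¹ * n₂ * theta d).val * (theta u).val = u.val * n₁.val := by
    rw [← Units.val_mul, ← Units.val_mul, hE]
  have hfin : (d⁻¹ * n₂ * theta d).val = n₁.val :=
    monomial_rigid hm₁ hN' hu0 hu1 hW0 hW1 hmat
  have hfin' : d⁻¹ * n₂ * theta d = n₁ := Units.ext hfin
  rw [← hfin']
  group
end
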